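/- Let G = (V, E) be a finite connected simple cubic graph (every vertex has degree 3) and let Ĝ be the multigraph constructed from G as follows, with M := 3|V| + 2|E| + 2. The vertices of Ĝ are: a node T; for every v ∈ V three nodes v, v', T_v; and for every edge e ∈ E with endpoints u and v, two nodes e_u and e_v. The edges of Ĝ are: for every edge e ∈ E with endpoints u and v, one edge between e_u and e_v, M parallel edges between u and e_u, and M parallel edges between e_v and v; and for every v ∈ V, three parallel edges between v' and T_v, M parallel edges between v and v', and M parallel edges between T_v and T. Then 2·dgon(Ĝ) = 11|V| + 2 − 2·α(G). -/
import Mathlib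


open Finset
open scoped Classical

variable {V : Type*}

/-- Laplacian of the multigraph with edge multiplicity function `m`, applied to `x`. -/
def lap [Fintype V] (m : V → V → ℕ) (x : V → ℤ) : V → ℤ :=
  fun u => (∑ w, (m u w : ℤ)) * x u - ∑ w, (m u w : ℤ) * x w

/-- A divisor is effective if it is nonnegative. -/
def Effective (D : V → ℤ) : Prop := ∀ v, 0 ≤ D v

/-- Linear equivalence of divisors. -/
def DivEquiv [Fintype V] (m : V → V → ℕ) (D D' : V → ℤ) : Prop :=
  ∃ x : V → ℤ, D - D' = lap m x

/-- Degree of a divisor. -/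
def divDeg [Fintype V] (D : V → ℤ) : ℤ := ∑ v, D v

/-- Indicator vector of a subset. -/
def indVec [DecidableEq V] (U : Finset V) : V → ℤ := fun v => if v ∈ U then 1 else 0

/-- The underlying graph of the multigraph is connected. -/
def Conn [Fintype V] (m : V → V → ℕ) : Prop :=
  (SimpleGraph.fromRel fun u v => m u v ≠ 0).Connected

/-- The equivalence relation `≡_D` on vertices. -/
def DEquiv [Fintype V] (m : V → V → ℕ) (D : V → ℤ) (u v : V) : Prop :=
  ∀ x : V → ℤ, Effective (D - lap m x) → x u = x v

/-- Rank of a divisor. -/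
noncomputable def divRank [Fintype V] (m : V → V → ℕ) (D : V → ℤ) : ℤ :=
  if ∃ D' : V → ℤ, DivEquiv m D D' ∧ Effective D' then
    sSup {k : ℤ | 0 ≤ k ∧ ∀ E : V → ℤ, Effective E → divDeg E ≤ k →
      ∃ D' : V → ℤ, DivEquiv m (D - E) D' ∧ Effective D'}
  else -1

/-- Gonality of the multigraph. -/
noncomputable def dgon (V : Type*) [Fintype V] (m : V → V → ℕ) : ℤ :=
  sInf {d : ℤ | ∃ D : V → ℤ, 1 ≤ divRank m D ∧ divDeg D = d}

/-- `S` is an independent set in the simple graph `G`. -/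
def IsIndepSet' (G : SimpleGraph V) (S : Finset V) : Prop :=
  ∀ u ∈ S, ∀ v ∈ S, ¬ G.Adj u v

/-- The independence number `α(G)`: the maximum size of an independent set in `G`. -/
noncomputable def alphaNum [Fintype V] (G : SimpleGraph V) : ℕ :=
  sSup {n : ℕ | ∃ S : Finset V, IsIndepSet' G S ∧ S.card = n}

/-- The vertex set of the graph `Ĝ` constructed from `G`:
`Sum.inl ()` is the node `T`;
`Sum.inr (Sum.inl v)` is the node `v`;
`Sum.inr (Sum.inr (Sum.inl v))` is the node `v'`;
`Sum.inr (Sum.inr (Sum.inr (Sum.inl v)))` is the node `T_v`;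
`Sum.inr (Sum.inr (Sum.inr (Sum.inr ⟨(u, w), h⟩)))` is the node `e_u` for the edge
`e = uw` of `G`. -/
abbrev HatV (G : SimpleGraph V) : Type _ :=
  Unit ⊕ V ⊕ V ⊕ V ⊕ {p : V × V // G.Adj p.1 p.2}

/-- The edge multiplicity function of the graph `Ĝ` constructed from `G`, with `M` the
multiplicity of the parallel classes: for every edge `e ∈ E(u,w)` there is one edge between
`e_u` and `e_w`, and `M` parallel edges between `u` and `e_u` (and between `e_w` and `w`);
for every `v ∈ V` there are three parallel edges between `v'` and `T_v`, `M` parallel edges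
between `v` and `v'`, and `M` parallel edges between `T_v` and `T`. -/
def hatM [DecidableEq V] (G : SimpleGraph V) (M : ℕ) : HatV G → HatV G → ℕ
  | Sum.inl _, Sum.inr (Sum.inr (Sum.inr (Sum.inl _))) => M
  | Sum.inr (Sum.inr (Sum.inr (Sum.inl _))), Sum.inl _ => M
  | Sum.inr (Sum.inr (Sum.inl v)), Sum.inr (Sum.inr (Sum.inr (Sum.inl w))) =>
      if v = w then 3 else 0
  | Sum.inr (Sum.inr (Sum.inr (Sum.inl w))), Sum.inr (Sum.inr (Sum.inl v)) =>
      if v = w then 3 else 0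
  | Sum.inr (Sum.inl v), Sum.inr (Sum.inr (Sum.inl w)) => if v = w then M else 0
  | Sum.inr (Sum.inr (Sum.inl w)), Sum.inr (Sum.inl v) => if v = w then M else 0
  | Sum.inr (Sum.inl u), Sum.inr (Sum.inr (Sum.inr (Sum.inr p))) =>
      if u = p.1.1 then M else 0
  | Sum.inr (Sum.inr (Sum.inr (Sum.inr p))), Sum.inr (Sum.inl u) =>
      if u = p.1.1 then M else 0
  | Sum.inr (Sum.inr (Sum.inr (Sum.inr p))), Sum.inr (Sum.inr (Sum.inr (Sum.inr q))) =>
      if p.1.1 = q.1.2 ∧ p.1.2 = q.1.1 then 1 else 0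
  | _, _ => 0

/-- The value `M := 3|V| + 2|E| + 2` used in the construction of `Ĝ`. -/
def bigM [Fintype V] [DecidableEq V] (G : SimpleGraph V) [DecidableRel G.Adj] : ℕ :=
  3 * Fintype.card V + 2 * G.edgeFinset.card + 2

section Prelim
variable [Fintype V]

lemma lap_eq_sum (m : V → V → ℕ) (x : V → ℤ) (u : V) :
    lap m x u = ∑ w, (m u w : ℤ) * (x u - x w) := by
  simp [lap, mul_sub, Finset.sum_sub_distrib, Finset.sum_mul]

lemma lap_add (m : V → V → ℕ) (x y : V → ℤ) :
    lap m (x + y) = lap m x + lap m y := by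
  funext u
  simp [lap, mul_add, Finset.sum_add_distrib]
  ring

lemma lap_sub' (m : V → V → ℕ) (x y : V → ℤ) :
    lap m (x - y) = lap m x - lap m y := by
  funext u
  simp [lap, mul_sub, Finset.sum_sub_distrib]
  ring

lemma lap_const (m : V → V → ℕ) (k : ℤ) : lap m (fun _ => k) = 0 := by
  funext u
  simp [lap, Finset.sum_mul]

lemma divDeg_lap (m : V → V → ℕ) (hsym : ∀ u w, m u w = m w u) (x : V → ℤ) :
    divDeg (lap m x) = 0 := by
  have h2 : ∀ u : V, (∑ w, (m u w : ℤ)) * x u = ∑ w, (m u w : ℤ) * x u := fun u =>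
    Finset.sum_mul ..
  simp only [divDeg, lap, Finset.sum_sub_distrib, h2]
  rw [Finset.sum_comm (f := fun u w => (m u w : ℤ) * x w)]
  rw [sub_eq_zero]
  apply Finset.sum_congr rfl
  intro u _
  apply Finset.sum_congr rfl
  intro w _
  rw [hsym]

lemma divDeg_sub (D D' : V → ℤ) : divDeg (D - D') = divDeg D - divDeg D' := by
  simp [divDeg, Finset.sum_sub_distrib]

lemma divDeg_eq_of_equiv (m : V → V → ℕ) (hsym : ∀ u w, m u w = m w u) {D D' : V → ℤ}
    (h : DivEquiv m D D') : divDeg D = divDeg D' := by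
  obtain ⟨x, hx⟩ := h
  have := congrArg divDeg hx
  rw [divDeg_sub, divDeg_lap m hsym x, sub_eq_zero] at this
  exact this

/-- Rigidity: if `D` and `D - lap x` are effective and `deg D < m u w`, then `x u = x w`. -/
lemma rigid (m : V → V → ℕ) (hsym : ∀ u v, m u v = m v u)
    (D : V → ℤ) (hD : Effective D) (x : V → ℤ) (hDx : Effective (D - lap m x))
    (u w : V) (hM : divDeg D < (m u w : ℤ)) : x u = x w := by
  -- key auxiliary claim
  have key : ∀ u w : V, x w < x u → (m u w : ℤ) ≤ divDeg D := by
    intro u w hlt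
    set A : Finset V := univ.filter (fun z => x u ≤ x z) with hA
    have hmemA : ∀ z, z ∈ A ↔ x u ≤ x z := by intro z; simp [hA]
    -- sum of lap over A
    have hsplit : ∀ z : V, lap m x z =
        (∑ y ∈ A, (m z y : ℤ) * (x z - x y)) + ∑ y ∈ univ.filter (fun y => ¬ x u ≤ x y), (m z y : ℤ) * (x z - x y) := by
      intro z
      rw [lap_eq_sum, ← Finset.sum_filter_add_sum_filter_not univ (fun y => x u ≤ x y)]
    have hAA : (∑ z ∈ A, ∑ y ∈ A, (m z y : ℤ) * (x z - x y)) = 0 := by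
      have hswap : (∑ z ∈ A, ∑ y ∈ A, (m z y : ℤ) * (x z - x y))
          = - ∑ z ∈ A, ∑ y ∈ A, (m z y : ℤ) * (x z - x y) := by
        conv_lhs => rw [Finset.sum_comm]
        rw [← Finset.sum_neg_distrib]
        apply Finset.sum_congr rfl; intro z _
        rw [← Finset.sum_neg_distrib]
        apply Finset.sum_congr rfl; intro y _
        rw [hsym]; ring
      linarith
    have hsumlap : (∑ z ∈ A, lap m x z)
        = ∑ z ∈ A, ∑ y ∈ univ.filter (fun y => ¬ x u ≤ x y), (m z y : ℤ) * (x z - x y) := by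
      rw [Finset.sum_congr rfl (fun z _ => hsplit z), Finset.sum_add_distrib, hAA, zero_add]
    -- each term in the cross sum is nonneg, and the (u,w) term is ≥ m u w
    have hterm : ∀ z ∈ A, ∀ y ∈ univ.filter (fun y => ¬ x u ≤ x y),
        (0:ℤ) ≤ (m z y : ℤ) * (x z - x y) := by
      intro z hz y hy
      rw [hmemA] at hz
      simp only [Finset.mem_filter] at hy
      have : x y < x z := lt_of_lt_of_le (lt_of_not_ge hy.2) hz
      exact mul_nonneg (Int.natCast_nonneg _) (by linarith)
    have huA : u ∈ A := by rw [hmemA]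
    have hwB : w ∈ univ.filter (fun y => ¬ x u ≤ x y) := by
      simp only [Finset.mem_filter, Finset.mem_univ, true_and]
      exact not_le.mpr hlt
    have hinner : (m u w : ℤ) ≤ ∑ y ∈ univ.filter (fun y => ¬ x u ≤ x y), (m u y : ℤ) * (x u - x y) := by
      have h1 : (m u w : ℤ) ≤ (m u w : ℤ) * (x u - x w) := by
        nlinarith [Int.natCast_nonneg (m u w), hlt]
      calc (m u w : ℤ) ≤ (m u w : ℤ) * (x u - x w) := h1
        _ ≤ _ := Finset.single_le_sum (fun y hy => hterm u huA y hy) hwB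
    have houter : (m u w : ℤ) ≤ ∑ z ∈ A, lap m x z := by
      rw [hsumlap]
      calc (m u w : ℤ) ≤ ∑ y ∈ univ.filter (fun y => ¬ x u ≤ x y), (m u y : ℤ) * (x u - x y) := hinner
        _ ≤ _ := Finset.single_le_sum (fun z hz => Finset.sum_nonneg (fun y hy => hterm z hz y hy)) huA
    have hup : (∑ z ∈ A, lap m x z) ≤ ∑ z ∈ A, D z := by
      have : ∀ z ∈ A, lap m x z ≤ D z := by
        intro z _
        have := hDx z
        simp only [Pi.sub_apply] at this
        linarith
      exact Finset.sum_le_sum this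
    have hDA : (∑ z ∈ A, D z) ≤ divDeg D := by
      unfold divDeg
      exact Finset.sum_le_sum_of_subset_of_nonneg (Finset.subset_univ A) (fun z _ _ => hD z)
    linarith
  by_contra hne
  rcases lt_or_gt_of_ne hne with h | h
  · have := key w u h
    rw [hsym] at this
    linarith
  · have := key u w h
    linarith

end Prelim

section RankTools
variable [Fintype V]

/-- Indicator divisor of a single vertex. -/
noncomputable def indic (q : V) : V → ℤ := fun z => by classical exact if z = q then 1 else 0

lemma indic_apply (q z : V) : indic q z = if z = q then 1 else 0 := by
  simp [indic]

lemma effective_indic (q : V) : Effective (indic q) := by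
  intro z
  rw [indic_apply]
  split_ifs <;> norm_num

lemma divDeg_indic (q : V) : divDeg (indic q) = 1 := by
  classical
  simp [divDeg, indic_apply, Finset.sum_ite_eq']

lemma lap_neg (m : V → V → ℕ) (x : V → ℤ) : lap m (-x) = - lap m x := by
  funext u
  simp [lap, Finset.sum_neg_distrib]
  ring

lemma divEquiv_symm {m : V → V → ℕ} {D D' : V → ℤ} (h : DivEquiv m D D') : DivEquiv m D' D := by
  obtain ⟨x, hx⟩ := h
  exact ⟨-x, by rw [lap_neg, ← hx]; abel⟩

lemma divEquiv_trans {m : V → V → ℕ} {D D' D'' : V → ℤ}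
    (h : DivEquiv m D D') (h' : DivEquiv m D' D'') : DivEquiv m D D'' := by
  obtain ⟨x, hx⟩ := h
  obtain ⟨y, hy⟩ := h'
  exact ⟨x + y, by rw [lap_add, ← hx, ← hy]; abel⟩

lemma eff_le_ind [Nonempty V] (E : V → ℤ) (hE : Effective E) (hd : divDeg E ≤ 1) :
    ∃ q : V, ∀ z, E z ≤ indic q z := by
  classical
  by_cases hz : ∀ z, E z = 0
  · exact ⟨Classical.arbitrary V, fun z => by rw [hz z]; exact effective_indic _ z⟩
  · push_neg at hz
    obtain ⟨q, hq⟩ := hz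
    have hq1 : 1 ≤ E q := lt_of_le_of_ne (hE q) (Ne.symm hq)
    refine ⟨q, fun z => ?_⟩
    rw [indic_apply]
    by_cases h : z = q
    · subst h
      rw [if_pos rfl]
      have : divDeg E = E z + ∑ w ∈ univ.erase z, E w := (Finset.add_sum_erase _ _ (mem_univ z)).symm
      have h2 : 0 ≤ ∑ w ∈ univ.erase z, E w := Finset.sum_nonneg (fun w _ => hE w)
      omega
    · rw [if_neg h]
      have : divDeg E = E q + ∑ w ∈ univ.erase q, E w := (Finset.add_sum_erase _ _ (mem_univ q)).symm
      have h2 : E z ≤ ∑ w ∈ univ.erase q, E w :=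
        Finset.single_le_sum (fun w _ => hE w) (Finset.mem_erase.mpr ⟨h, mem_univ z⟩)
      omega

lemma divDeg_nonneg_of_effective {D : V → ℤ} (h : Effective D) : 0 ≤ divDeg D :=
  Finset.sum_nonneg (fun v _ => h v)

lemma bddAbove_rankset [Nonempty V] (m : V → V → ℕ) (hsym : ∀ u w, m u w = m w u) (D : V → ℤ) :
    BddAbove {k : ℤ | 0 ≤ k ∧ ∀ E : V → ℤ, Effective E → divDeg E ≤ k →
      ∃ D' : V → ℤ, DivEquiv m (D - E) D' ∧ Effective D'} := by
  classical
  refine ⟨divDeg D, fun k hk => ?_⟩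
  obtain ⟨hk0, hP⟩ := hk
  set q₀ := Classical.arbitrary V
  set E : V → ℤ := fun z => if z = q₀ then k else 0 with hE
  have hEeff : Effective E := by
    intro z
    simp only [hE]
    split_ifs <;> omega
  have hEdeg : divDeg E = k := by
    simp [divDeg, hE, Finset.sum_ite_eq']
  obtain ⟨D', hequiv, heff⟩ := hP E hEeff (le_of_eq hEdeg)
  have h1 : divDeg (D - E) = divDeg D' := divDeg_eq_of_equiv m hsym hequiv
  rw [divDeg_sub, hEdeg] at h1
  have := divDeg_nonneg_of_effective heff
  omega

lemma divRank_ge_one_intro [Nonempty V] (m : V → V → ℕ) (hsym : ∀ u w, m u w = m w u)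
    (D : V → ℤ) (hD : ∃ D', DivEquiv m D D' ∧ Effective D')
    (h : ∀ q : V, ∃ D', DivEquiv m (D - indic q) D' ∧ Effective D') :
    1 ≤ divRank m D := by
  rw [divRank, if_pos hD]
  apply le_csSup (bddAbove_rankset m hsym D)
  refine ⟨by norm_num, fun E hE hdE => ?_⟩
  obtain ⟨q, hq⟩ := eff_le_ind E hE hdE
  obtain ⟨D', hequiv, heff⟩ := h q
  refine ⟨D' + (indic q - E), ?_, ?_⟩
  · obtain ⟨x, hx⟩ := hequiv
    refine ⟨x, ?_⟩
    rw [← hx]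
    abel
  · intro z
    have h1 := heff z
    have h2 := hq z
    simp only [Pi.add_apply, Pi.sub_apply]
    omega

lemma divRank_ge_one_elim [Nonempty V] (m : V → V → ℕ) (hsym : ∀ u w, m u w = m w u)
    (D : V → ℤ) (h : 1 ≤ divRank m D) :
    (∃ D', DivEquiv m D D' ∧ Effective D') ∧
      ∀ q : V, ∃ D', DivEquiv m (D - indic q) D' ∧ Effective D' := by
  rw [divRank] at h
  by_cases hg : ∃ D' : V → ℤ, DivEquiv m D D' ∧ Effective D'
  · rw [if_pos hg] at h
    refine ⟨hg, ?_⟩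
    set S := {k : ℤ | 0 ≤ k ∧ ∀ E : V → ℤ, Effective E → divDeg E ≤ k →
      ∃ D' : V → ℤ, DivEquiv m (D - E) D' ∧ Effective D'} with hS
    have h0 : (0:ℤ) ∈ S := by
      refine ⟨le_refl 0, fun E hE hdE => ?_⟩
      have hE0 : E = 0 := by
        funext z
        have h1 : E z ≤ divDeg E := Finset.single_le_sum (fun w _ => hE w) (mem_univ z)
        have h2 := hE z
        simp only [Pi.zero_apply]
        omega
      rw [hE0, sub_zero]
      exact hg
    have hmem : sSup S ∈ S := Int.csSup_mem ⟨0, h0⟩ (bddAbove_rankset m hsym D)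
    intro q
    exact hmem.2 (indic q) (effective_indic q) (by rw [divDeg_indic]; exact h)
  · rw [if_neg hg] at h
    omega

lemma dgon_eq_of [Nonempty V] (m : V → V → ℕ) (t : ℤ)
    (hmem : ∃ D : V → ℤ, 1 ≤ divRank m D ∧ divDeg D = t)
    (hlb : ∀ D : V → ℤ, 1 ≤ divRank m D → t ≤ divDeg D) :
    dgon V m = t := by
  apply le_antisymm
  · apply csInf_le
    · refine ⟨t, fun d hd => ?_⟩
      obtain ⟨D, h1, h2⟩ := hd
      rw [← h2]
      exact hlb D h1
    · exact hmem
  · apply le_csInf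
    · exact ⟨t, hmem⟩
    · rintro d ⟨D, h1, h2⟩
      rw [← h2]
      exact hlb D h1

end RankTools

section Hat
variable [Fintype V] [DecidableEq V] (G : SimpleGraph V) [DecidableRel G.Adj]

/-- Short names for the five kinds of vertices of `Ĝ`. -/
abbrev vT : HatV G := Sum.inl ()
abbrev vA (v : V) : HatV G := Sum.inr (Sum.inl v)
abbrev vB (v : V) : HatV G := Sum.inr (Sum.inr (Sum.inl v))
abbrev vC (v : V) : HatV G := Sum.inr (Sum.inr (Sum.inr (Sum.inl v)))
abbrev vE (p : {p : V × V // G.Adj p.1 p.2}) : HatV G := Sum.inr (Sum.inr (Sum.inr (Sum.inr p)))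

/-- Swap of an oriented edge. -/
def swp (p : {p : V × V // G.Adj p.1 p.2}) : {p : V × V // G.Adj p.1 p.2} :=
  ⟨(p.1.2, p.1.1), p.2.symm⟩

lemma swp_swp (p : {p : V × V // G.Adj p.1 p.2}) : swp G (swp G p) = p := rfl

/-- The class-constant firing vector with class potentials `c`. -/
def xOf (c : V → ℤ) : HatV G → ℤ
  | Sum.inl _ => 0
  | Sum.inr (Sum.inl v) => - c v
  | Sum.inr (Sum.inr (Sum.inl v)) => - c v
  | Sum.inr (Sum.inr (Sum.inr (Sum.inl _))) => 0
  | Sum.inr (Sum.inr (Sum.inr (Sum.inr p))) => - c p.1.1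

/-- The Laplacian applied to a class-constant firing vector. -/
def Lc (c : V → ℤ) : HatV G → ℤ
  | Sum.inl _ => 0
  | Sum.inr (Sum.inl _) => 0
  | Sum.inr (Sum.inr (Sum.inl v)) => -(3 * c v)
  | Sum.inr (Sum.inr (Sum.inr (Sum.inl v))) => 3 * c v
  | Sum.inr (Sum.inr (Sum.inr (Sum.inr p))) => c p.1.2 - c p.1.1

lemma hatM_symm (M : ℕ) : ∀ u w : HatV G, hatM G M u w = hatM G M w u := by
  rintro (u | u | u | u | u) (w | w | w | w | w) <;>
    simp [hatM] <;>
    simp [eq_comm, and_comm]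

set_option maxHeartbeats 1000000 in
lemma lap_hat (M : ℕ) (c : V → ℤ) : lap (hatM G M) (xOf G c) = Lc G c := by
  funext q
  rw [lap_eq_sum]
  rcases q with _ | q | q | q | q
  · simp [Fintype.sum_sum_type, hatM, xOf, Lc]
  · simp [Fintype.sum_sum_type, hatM, xOf, Lc, Finset.sum_ite_eq, Finset.sum_ite_eq']
    apply Finset.sum_eq_zero
    intro p _
    by_cases h : q = p.1.1
    · rw [if_pos h, h]; ring
    · rw [if_neg h]
  · simp [Fintype.sum_sum_type, hatM, xOf, Lc, Finset.sum_ite_eq, Finset.sum_ite_eq']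
  · simp [Fintype.sum_sum_type, hatM, xOf, Lc, Finset.sum_ite_eq, Finset.sum_ite_eq']
  · simp [Fintype.sum_sum_type, hatM, xOf, Lc, Finset.sum_ite_eq, Finset.sum_ite_eq']
    have key : ∀ x : {p : V × V // G.Adj p.1 p.2},
        (if (q:V×V).1 = (x:V×V).2 ∧ (q:V×V).2 = (x:V×V).1 then -c (q:V×V).1 + c (x:V×V).1 else (0:ℤ))
        = if x = ⟨((q:V×V).2, (q:V×V).1), q.2.symm⟩ then c (q:V×V).2 - c (q:V×V).1 else 0 := by
      intro x
      by_cases h : x = (⟨((q:V×V).2, (q:V×V).1), q.2.symm⟩ : {p : V × V // G.Adj p.1 p.2})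
      · subst h
        rw [if_pos ⟨rfl, rfl⟩, if_pos rfl]
        ring
      · rw [if_neg h, if_neg]
        rintro ⟨h1, h2⟩
        exact h (Subtype.ext (Prod.ext h2.symm h1.symm))
    rw [Finset.sum_congr rfl (fun x _ => key x)]
    simp [Finset.sum_ite_eq']

lemma divDeg_hat (D : HatV G → ℤ) :
    divDeg D = D (vT G) + ((∑ v, D (vA G v) + ∑ v, D (vB G v) + ∑ v, D (vC G v))
      + ∑ p, D (vE G p)) := by
  simp [divDeg, Fintype.sum_sum_type]
  ring

lemma sum_swp (f : {p : V × V // G.Adj p.1 p.2} → ℤ) :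
    ∑ p, f (swp G p) = ∑ p, f p := by
  exact Fintype.sum_equiv ⟨swp G, swp G, swp_swp G, swp_swp G⟩ _ _ (fun p => rfl)

lemma card_pairs :
    Fintype.card {p : V × V // G.Adj p.1 p.2} = 2 * G.edgeFinset.card := by
  rw [← SimpleGraph.dart_card_eq_twice_card_edges]
  apply Fintype.card_congr
  exact ⟨fun p => ⟨p.1, p.2⟩, fun d => ⟨d.toProd, d.adj⟩, fun p => rfl, fun d => rfl⟩

end Hat


section Indep
variable [Fintype V] [DecidableEq V] (G : SimpleGraph V) [DecidableRel G.Adj]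

lemma alpha_bddAbove : BddAbove {n : ℕ | ∃ S : Finset V, IsIndepSet' G S ∧ S.card = n} := by
  refine ⟨Fintype.card V, fun n hn => ?_⟩
  obtain ⟨S, _, hcard⟩ := hn
  rw [← hcard]
  exact Finset.card_le_univ S

lemma alpha_mem : ∃ S : Finset V, IsIndepSet' G S ∧ S.card = alphaNum G := by
  have hne : {n : ℕ | ∃ S : Finset V, IsIndepSet' G S ∧ S.card = n}.Nonempty :=
    ⟨0, ∅, fun u hu => by simp at hu, by simp⟩
  exact Nat.sSup_mem hne (alpha_bddAbove G)

lemma card_le_alpha (S : Finset V) (h : IsIndepSet' G S) : S.card ≤ alphaNum G :=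
  le_csSup (alpha_bddAbove G) ⟨S, h, rfl⟩

/-- Number of ordered adjacent pairs inside `F`. -/
def pairsIn (F : Finset V) : ℕ :=
  ((univ : Finset {p : V × V // G.Adj p.1 p.2}).filter
    (fun p => p.1.1 ∈ F ∧ p.1.2 ∈ F)).card

lemma indep_extract (F : Finset V) :
    ∃ S : Finset V, IsIndepSet' G S ∧ 2 * F.card ≤ 2 * S.card + pairsIn G F := by
  classical
  induction F using Finset.strongInduction with
  | _ F ih =>
    by_cases hI : IsIndepSet' G F
    · exact ⟨F, hI, by omega⟩
    · simp only [IsIndepSet'] at hI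
      push_neg at hI
      obtain ⟨u, hu, w, hw, hadj⟩ := hI
      have hne : u ≠ w := G.ne_of_adj hadj
      obtain ⟨S, hS, hcard⟩ := ih (F.erase u) (Finset.erase_ssubset hu)
      refine ⟨S, hS, ?_⟩
      have hkey : pairsIn G (F.erase u) + 2 ≤ pairsIn G F := by
        set p₀ : {p : V × V // G.Adj p.1 p.2} := ⟨(u, w), hadj⟩ with hp₀
        set p₁ : {p : V × V // G.Adj p.1 p.2} := ⟨(w, u), hadj.symm⟩ with hp₁
        have hne01 : p₀ ≠ p₁ := by
          intro h
          have : (u, w) = (w, u) := congrArg Subtype.val h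
          exact hne (congrArg Prod.fst this)
        have hsub : insert p₀ (insert p₁
            ((univ : Finset {p : V × V // G.Adj p.1 p.2}).filter
              (fun p => p.1.1 ∈ F.erase u ∧ p.1.2 ∈ F.erase u)))
            ⊆ ((univ : Finset {p : V × V // G.Adj p.1 p.2}).filter
              (fun p => p.1.1 ∈ F ∧ p.1.2 ∈ F)) := by
          intro p hp
          simp only [Finset.mem_insert, Finset.mem_filter, Finset.mem_univ, true_and] at hp ⊢
          rcases hp with rfl | rfl | hp
          · exact ⟨hu, hw⟩
          · exact ⟨hw, hu⟩
          · exact ⟨Finset.mem_of_mem_erase hp.1, Finset.mem_of_mem_erase hp.2⟩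
        have hnm0 : p₀ ∉ (insert p₁
            ((univ : Finset {p : V × V // G.Adj p.1 p.2}).filter
              (fun p => p.1.1 ∈ F.erase u ∧ p.1.2 ∈ F.erase u))) := by
          simp only [Finset.mem_insert, Finset.mem_filter, Finset.mem_univ, true_and]
          push_neg
          refine ⟨hne01, fun h _ => ?_⟩
          exact absurd (Finset.mem_erase.mp h).1 (by simp [hp₀])
        have hnm1 : p₁ ∉ ((univ : Finset {p : V × V // G.Adj p.1 p.2}).filter
              (fun p => p.1.1 ∈ F.erase u ∧ p.1.2 ∈ F.erase u)) := by
          simp only [Finset.mem_filter, Finset.mem_univ, true_and]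
          intro h
          exact absurd (Finset.mem_erase.mp h.2).1 (by simp [hp₁])
        have hcard1 := Finset.card_le_card hsub
        rw [Finset.card_insert_of_notMem hnm0, Finset.card_insert_of_notMem hnm1] at hcard1
        unfold pairsIn
        omega
      have hFcard : F.card = (F.erase u).card + 1 := by
        rw [Finset.card_erase_of_mem hu]
        have : 1 ≤ F.card := Finset.card_pos.mpr ⟨u, hu⟩
        omega
      omega

end Indep


section Upper
variable [Fintype V] [DecidableEq V] (G : SimpleGraph V) [DecidableRel G.Adj]
variable (S : Finset V) (wgt : V → ℕ)

/-- The optimal divisor on `Ĝ`: one chip on `T` and on each `v`; one chip on each of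
`v'`, `T_v` for `v ∈ S` and three chips on `T_v` for `v ∉ S`; and one chip on `e_u`
for each edge `e = uw` oriented from its lower-weight endpoint `w` to `u`. -/
def Dhat : HatV G → ℤ
  | Sum.inl _ => 1
  | Sum.inr (Sum.inl _) => 1
  | Sum.inr (Sum.inr (Sum.inl v)) => if v ∈ S then 1 else 0
  | Sum.inr (Sum.inr (Sum.inr (Sum.inl v))) => if v ∈ S then 1 else 3
  | Sum.inr (Sum.inr (Sum.inr (Sum.inr p))) => if wgt p.1.2 < wgt p.1.1 then 1 else 0

lemma Dhat_effective : Effective (Dhat G S wgt) := by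
  intro r
  rcases r with _ | u | u | u | r <;> simp [Dhat] <;> split_ifs <;> omega

variable {G S wgt}

lemma upper_sys (hS : IsIndepSet' G S)
    (hwADJ : ∀ {u w : V}, G.Adj u w → wgt u ≠ wgt w)
    (hwS : ∀ {z v : V}, z ∈ S → v ∉ S → wgt v < wgt z)
    (q : HatV G) :
    ∃ c : V → ℤ, Effective (Dhat G S wgt - indic q - Lc G c) := by
  rcases q with _ | v | v | v | p
  · -- q = T
    refine ⟨fun _ => 0, fun r => ?_⟩
    rcases r with _ | u | u | u | r <;>
      simp [Dhat, Lc, indic_apply] <;> split_ifs <;> omega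
  · -- q = A v
    refine ⟨fun _ => 0, fun r => ?_⟩
    rcases r with _ | u | u | u | r <;>
      simp [Dhat, Lc, indic_apply] <;> split_ifs <;> omega
  · -- q = B v
    by_cases hv : v ∈ S
    · refine ⟨fun _ => 0, fun r => ?_⟩
      rcases r with _ | u | u | u | r
      · simp [Dhat, Lc, indic_apply]
      · simp [Dhat, Lc, indic_apply]
      · by_cases hu : u = v
        · subst hu; simp [Dhat, Lc, indic_apply, hv]
        · simp [Dhat, Lc, indic_apply, hu] ; split_ifs <;> omega
      · simp [Dhat, Lc, indic_apply] <;> split_ifs <;> omega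
      · simp [Dhat, Lc, indic_apply] <;> split_ifs <;> omega
    · refine ⟨fun z => if z ∈ S then 0 else 1, fun r => ?_⟩
      rcases r with _ | u | u | u | r
      · simp [Dhat, Lc, indic_apply]
      · simp [Dhat, Lc, indic_apply]
      · by_cases hu : u = v
        · subst hu; simp [Dhat, Lc, indic_apply, hv]
        · simp [Dhat, Lc, indic_apply, hu]; split_ifs <;> omega
      · simp [Dhat, Lc, indic_apply]; split_ifs <;> omega
      · simp only [Dhat, Lc, indic_apply, Pi.sub_apply]
        by_cases h1 : r.1.1 ∈ S
        · by_cases h2 : r.1.2 ∈ S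
          · exact absurd r.2 (hS _ h1 _ h2)
          · have : wgt r.1.2 < wgt r.1.1 := hwS h1 h2
            simp [h1, h2, this]
        · by_cases h2 : r.1.2 ∈ S <;> simp [h1, h2] <;> split_ifs <;> omega
  · -- q = C v
    refine ⟨fun _ => 0, fun r => ?_⟩
    rcases r with _ | u | u | u | r
    · simp [Dhat, Lc, indic_apply]
    · simp [Dhat, Lc, indic_apply]
    · simp [Dhat, Lc, indic_apply]; split_ifs <;> omega
    · by_cases hu : u = v
      · subst hu; simp [Dhat, Lc, indic_apply]; split_ifs <;> omega
      · simp [Dhat, Lc, indic_apply, hu]; split_ifs <;> omega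
    · simp [Dhat, Lc, indic_apply]; split_ifs <;> omega
  · -- q = E p
    by_cases hchip : wgt p.1.2 < wgt p.1.1
    · refine ⟨fun _ => 0, fun r => ?_⟩
      rcases r with _ | u | u | u | r
      · simp [Dhat, Lc, indic_apply]
      · simp [Dhat, Lc, indic_apply]
      · simp [Dhat, Lc, indic_apply]; split_ifs <;> omega
      · simp [Dhat, Lc, indic_apply]; split_ifs <;> omega
      · by_cases hr : r = p
        · subst hr; simp [Dhat, Lc, indic_apply, hchip]
        · simp [Dhat, Lc, indic_apply, hr]; split_ifs <;> omega
    · have hlt : wgt p.1.1 < wgt p.1.2 :=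
        lt_of_le_of_ne (not_lt.mp hchip) (hwADJ p.2)
      have hp11S : p.1.1 ∉ S := by
        intro h
        by_cases h2 : p.1.2 ∈ S
        · exact absurd p.2 (hS _ h _ h2)
        · exact absurd (hwS h h2) (by omega)
      refine ⟨fun z => if wgt z ≤ wgt p.1.1 then 1 else 0, fun r => ?_⟩
      rcases r with _ | u | u | u | r
      · simp [Dhat, Lc, indic_apply]
      · simp [Dhat, Lc, indic_apply]
      · simp [Dhat, Lc, indic_apply]; split_ifs <;> omega
      · by_cases hu : wgt u ≤ wgt p.1.1
        · have huS : u ∉ S := by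
            intro h
            exact absurd (hwS h hp11S) (by omega)
          simp [Dhat, Lc, indic_apply, hu, huS]
        · simp [Dhat, Lc, indic_apply, hu]; split_ifs <;> omega
      · by_cases hr : r = p
        · subst hr
          have h2 : ¬ wgt r.1.2 ≤ wgt r.1.1 := by omega
          simp [Dhat, Lc, indic_apply, hchip, h2]
        · simp only [Dhat, Lc, indic_apply, Pi.sub_apply]
          by_cases h1 : wgt r.1.1 ≤ wgt p.1.1
          · simp [h1, hr]; split_ifs <;> omega
          · by_cases h2 : wgt r.1.2 ≤ wgt p.1.1
            · have : wgt r.1.2 < wgt r.1.1 := by omega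
              simp [h1, h2, hr, this]
            · simp [h1, h2, hr]; split_ifs <;> omega

set_option maxHeartbeats 2000000 in
/-- The degree of the optimal divisor. -/
lemma divDeg_Dhat (hwADJ : ∀ {u w : V}, G.Adj u w → wgt u ≠ wgt w) :
    divDeg (Dhat G S wgt) = 4 * (Fintype.card V : ℤ) + (G.edgeFinset.card : ℤ) + 1
      - (S.card : ℤ) := by
  rw [divDeg_hat]
  have hA : (∑ v : V, Dhat G S wgt (vA G v)) = (Fintype.card V : ℤ) := by
    simp [Dhat]
  have hB : (∑ v : V, Dhat G S wgt (vB G v)) = (S.card : ℤ) := by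
    have : ∀ v : V, Dhat G S wgt (vB G v) = if v ∈ S then (1:ℤ) else 0 := fun v => rfl
    simp only [this, Finset.sum_ite_mem, Finset.univ_inter, Finset.sum_const]
    simp
  have hC : (∑ v : V, Dhat G S wgt (vC G v)) = 3 * (Fintype.card V : ℤ) - 2 * (S.card : ℤ) := by
    have h1 : ∀ v : V, Dhat G S wgt (vC G v)
        = 3 - 2 * (if v ∈ S then (1:ℤ) else 0) := by
      intro v
      show (if v ∈ S then (1:ℤ) else 3) = _
      split_ifs <;> ring
    simp only [h1, Finset.sum_sub_distrib, Finset.sum_const, ← Finset.mul_sum]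
    simp only [Finset.sum_ite_mem, Finset.univ_inter, Finset.sum_const]
    simp [Finset.card_univ]
    ring
  have hT : Dhat G S wgt (vT G) = 1 := rfl
  have hE : (∑ p, Dhat G S wgt (vE G p)) = (G.edgeFinset.card : ℤ) := by
    have h2 : (∑ p, Dhat G S wgt (vE G p)) + (∑ p, Dhat G S wgt (vE G p))
        = 2 * (G.edgeFinset.card : ℤ) := by
      nth_rewrite 2 [← sum_swp G (fun p => Dhat G S wgt (vE G p))]
      rw [← Finset.sum_add_distrib]
      have h3 : ∀ p : {p : V × V // G.Adj p.1 p.2},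
          Dhat G S wgt (vE G p) + Dhat G S wgt (vE G (swp G p)) = 1 := by
        intro p
        have hne := hwADJ p.2
        show (if wgt p.1.2 < wgt p.1.1 then (1:ℤ) else 0)
          + (if wgt (swp G p).1.2 < wgt (swp G p).1.1 then (1:ℤ) else 0) = 1
        have : (swp G p).1.1 = p.1.2 := rfl
        have : (swp G p).1.2 = p.1.1 := rfl
        simp only [show ((swp G p) : V × V).1 = p.1.2 from rfl,
          show ((swp G p) : V × V).2 = p.1.1 from rfl]
        split_ifs <;> omega
      rw [Finset.sum_congr rfl (fun p _ => h3 p)]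
      rw [Finset.sum_const, Finset.card_univ, card_pairs G]
      push_cast
      ring
    omega
  rw [hT, hA, hB, hC, hE]
  ring

lemma Dhat_rank (hS : IsIndepSet' G S)
    (hwADJ : ∀ {u w : V}, G.Adj u w → wgt u ≠ wgt w)
    (hwS : ∀ {z v : V}, z ∈ S → v ∉ S → wgt v < wgt z)
    (M : ℕ) :
    1 ≤ divRank (hatM G M) (Dhat G S wgt) := by
  apply divRank_ge_one_intro (hatM G M) (hatM_symm G M)
  · refine ⟨Dhat G S wgt, ⟨0, ?_⟩, Dhat_effective G S wgt⟩
    rw [sub_self]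
    exact (lap_const (hatM G M) 0).symm
  · intro q
    obtain ⟨c, hc⟩ := upper_sys hS hwADJ hwS q
    refine ⟨Dhat G S wgt - indic q - Lc G c, ⟨xOf G c, ?_⟩, hc⟩
    rw [lap_hat]
    abel

end Upper


section Lower
variable [Fintype V] [DecidableEq V] (G : SimpleGraph V) [DecidableRel G.Adj]

set_option maxHeartbeats 2000000 in
lemma lower_bound (hcubic : ∀ v : V, G.degree v = 3) (D : HatV G → ℤ)
    (h : 1 ≤ divRank (hatM G (bigM G)) D) :
    4 * (Fintype.card V : ℤ) + (G.edgeFinset.card : ℤ) + 1 - (alphaNum G : ℤ)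
      ≤ divDeg D := by
  have hne : Nonempty (HatV G) := ⟨Sum.inl ()⟩
  have hhs : 3 * Fintype.card V = 2 * G.edgeFinset.card := by
    have h1 := SimpleGraph.sum_degrees_eq_twice_card_edges G
    simp only [hcubic, Finset.sum_const, Finset.card_univ, smul_eq_mul] at h1
    omega
  obtain ⟨⟨Deff, hDeq, hDeff⟩, hq⟩ :=
    divRank_ge_one_elim (hatM G (bigM G)) (hatM_symm G (bigM G)) D h
  have hdeg : divDeg Deff = divDeg D :=
    (divDeg_eq_of_equiv (hatM G (bigM G)) (hatM_symm G (bigM G)) hDeq).symm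
  by_cases hdM : divDeg D < (bigM G : ℤ)
  swap
  · -- degree at least M, which exceeds the target
    have hM : (bigM G : ℤ) = 3 * (Fintype.card V : ℤ) + 2 * (G.edgeFinset.card : ℤ) + 2 := by
      unfold bigM
      push_cast
      ring
    have hα : (0:ℤ) ≤ (alphaNum G : ℤ) := Int.natCast_nonneg _
    have hhs' : 3 * (Fintype.card V : ℤ) = 2 * (G.edgeFinset.card : ℤ) := by exact_mod_cast hhs
    omega
  · -- main case: degree below M, rigidity applies
    obtain ⟨y, hy⟩ := hDeq
    have hsys : ∀ q : HatV G, ∃ c : V → ℤ, Effective (Deff - indic q - Lc G c) := by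
      intro q
      obtain ⟨D', ⟨x, hx⟩, hD'⟩ := hq q
      set x' : HatV G → ℤ := x - y with hx'def
      have hkey : Deff - indic q - D' = lap (hatM G (bigM G)) x' := by
        rw [hx'def, lap_sub', ← hx, ← hy]
        abel
      have heff2 : Effective (Deff - lap (hatM G (bigM G)) x') := by
        intro r
        have h1 := congrFun hkey r
        have h2 := hD' r
        have h3 := effective_indic q r
        simp only [Pi.sub_apply] at h1 ⊢
        omega
      have hrig : ∀ u w : HatV G, (bigM G : ℤ) ≤ (hatM G (bigM G) u w : ℤ) → x' u = x' w := by
        intro u w huw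
        apply rigid (hatM G (bigM G)) (hatM_symm G (bigM G)) Deff hDeff x' heff2
        omega
      set c : V → ℤ := fun v => x' (vT G) - x' (vA G v) with hc
      have hTC : ∀ v : V, x' (vC G v) = x' (vT G) :=
        fun v => (hrig (vT G) (vC G v) (by simp [hatM])).symm
      have hAB : ∀ v : V, x' (vB G v) = x' (vA G v) :=
        fun v => (hrig (vA G v) (vB G v) (by simp [hatM])).symm
      have hAE : ∀ p : {p : V × V // G.Adj p.1 p.2}, x' (vE G p) = x' (vA G p.1.1) :=
        fun p => (hrig (vA G p.1.1) (vE G p) (by simp [hatM])).symm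
      have hxeq : x' = xOf G c + (fun _ => x' (vT G)) := by
        funext r
        rcases r with _ | u | u | u | r
        · simp [xOf]
        · simp only [Pi.add_apply, xOf, hc]
          ring
        · simp only [Pi.add_apply, xOf, hc, hAB u]
          ring
        · simp only [Pi.add_apply, xOf, hTC u]
          ring
        · simp only [Pi.add_apply, xOf, hc, hAE r]
          ring
      have hlapx : lap (hatM G (bigM G)) x' = Lc G c := by
        rw [hxeq, lap_add, lap_hat, lap_const, add_zero]
      refine ⟨c, ?_⟩
      intro r
      have h1 := congrFun hkey r
      rw [hlapx] at h1
      have h2 := hD' r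
      simp only [Pi.sub_apply] at h1 ⊢
      omega
    clear hy hq
    -- extract the numeric constraints
    have F1 : 1 ≤ Deff (vT G) := by
      obtain ⟨c, hc⟩ := hsys (vT G)
      have := hc (vT G)
      simp [indic_apply, Lc] at this
      omega
    have F2 : ∀ v : V, 1 ≤ Deff (vA G v) := by
      intro v
      obtain ⟨c, hc⟩ := hsys (vA G v)
      have := hc (vA G v)
      simp [indic_apply, Lc] at this
      omega
    have FBC : ∀ v : V, (2 ≤ Deff (vB G v) + Deff (vC G v)) ∧
        (¬(Deff (vB G v) = 1 ∧ Deff (vC G v) = 1) →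
          3 ≤ Deff (vB G v) + Deff (vC G v)) := by
      intro v
      obtain ⟨c1, hc1⟩ := hsys (vC G v)
      obtain ⟨c2, hc2⟩ := hsys (vB G v)
      have h1 := hc1 (vC G v)
      have h2 := hc1 (vB G v)
      have h3 := hc2 (vB G v)
      have h4 := hc2 (vC G v)
      have h5 := hDeff (vB G v)
      have h6 := hDeff (vC G v)
      simp [indic_apply, Lc] at h1 h2 h3 h4
      omega
    have FE1 : ∀ p : {p : V × V // G.Adj p.1 p.2},
        1 ≤ Deff (vE G p) + Deff (vE G (swp G p)) := by
      intro p
      obtain ⟨c, hc⟩ := hsys (vE G p)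
      have hsp : swp G p ≠ p := by
        intro hsp
        have h0 : ((swp G p : {p : V × V // G.Adj p.1 p.2}) : V × V) = (p : V × V) :=
          congrArg Subtype.val hsp
        exact G.ne_of_adj p.2.symm (congrArg Prod.fst h0)
      have h1 := hc (vE G p)
      have h2 := hc (vE G (swp G p))
      simp [indic_apply, Lc] at h1
      simp [indic_apply, Lc, hsp] at h2
      have h3 : ((swp G p : {p : V × V // G.Adj p.1 p.2}) : V × V).1 = (p : V × V).2 := rfl
      have h4 : ((swp G p : {p : V × V // G.Adj p.1 p.2}) : V × V).2 = (p : V × V).1 := rfl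
      rw [h3, h4] at h2
      omega
    have FE2 : ∀ p : {p : V × V // G.Adj p.1 p.2},
        Deff (vB G p.1.1) = 1 → Deff (vC G p.1.1) = 1 →
        Deff (vB G p.1.2) = 1 → Deff (vC G p.1.2) = 1 → 1 ≤ Deff (vE G p) := by
      intro p hB1 hC1 hB2 hC2
      obtain ⟨c, hc⟩ := hsys (vE G p)
      have h1 := hc (vE G p)
      have h2 := hc (vB G p.1.1)
      have h3 := hc (vC G p.1.1)
      have h4 := hc (vB G p.1.2)
      have h5 := hc (vC G p.1.2)
      simp [indic_apply, Lc] at h1 h2 h3 h4 h5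
      omega
    -- summation
    set Bd : Finset V := univ.filter
      (fun v => Deff (vB G v) = 1 ∧ Deff (vC G v) = 1) with hBd
    have hBC : 3 * (Fintype.card V : ℤ) - (Bd.card : ℤ)
        ≤ ∑ v, (Deff (vB G v) + Deff (vC G v)) := by
      have hpt : ∀ v ∈ (univ : Finset V), (if v ∈ Bd then (2:ℤ) else 3)
          ≤ Deff (vB G v) + Deff (vC G v) := by
        intro v _
        by_cases hv : v ∈ Bd
        · rw [if_pos hv]
          exact (FBC v).1
        · rw [if_neg hv]
          rw [hBd, Finset.mem_filter] at hv
          exact (FBC v).2 (by tauto)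
      calc 3 * (Fintype.card V : ℤ) - (Bd.card : ℤ)
          = ∑ v : V, (if v ∈ Bd then (2:ℤ) else 3) := by
            have : ∀ v : V, (if v ∈ Bd then (2:ℤ) else 3)
                = 3 - (if v ∈ Bd then (1:ℤ) else 0) := by
              intro v; split_ifs <;> ring
            simp only [this, Finset.sum_sub_distrib, Finset.sum_const,
              Finset.card_univ, Finset.sum_boole]
            simp
            ring
        _ ≤ _ := Finset.sum_le_sum hpt
    have hE2 : 2 * (G.edgeFinset.card : ℤ) + (pairsIn G Bd : ℤ)
        ≤ 2 * ∑ p, Deff (vE G p) := by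
      have h2s : 2 * (∑ p, Deff (vE G p))
          = ∑ p, (Deff (vE G p) + Deff (vE G (swp G p))) := by
        rw [Finset.sum_add_distrib, sum_swp G (fun p => Deff (vE G p))]
        ring
      have hpt : ∀ p ∈ (univ : Finset {p : V × V // G.Adj p.1 p.2}),
          (1 + if (p.1.1 ∈ Bd ∧ p.1.2 ∈ Bd) then (1:ℤ) else 0)
            ≤ Deff (vE G p) + Deff (vE G (swp G p)) := by
        intro p _
        by_cases hp : p.1.1 ∈ Bd ∧ p.1.2 ∈ Bd
        · rw [if_pos hp]
          obtain ⟨hp1, hp2⟩ := hp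
          rw [hBd, Finset.mem_filter] at hp1 hp2
          have ha := FE2 p hp1.2.1 hp1.2.2 hp2.2.1 hp2.2.2
          have hb := FE2 (swp G p) hp2.2.1 hp2.2.2 hp1.2.1 hp1.2.2
          omega
        · rw [if_neg hp]
          have := FE1 p
          omega
      have hsum : ∑ p : {p : V × V // G.Adj p.1 p.2},
          (1 + if (p.1.1 ∈ Bd ∧ p.1.2 ∈ Bd) then (1:ℤ) else 0)
          = 2 * (G.edgeFinset.card : ℤ) + (pairsIn G Bd : ℤ) := by
        rw [Finset.sum_add_distrib, Finset.sum_const, Finset.card_univ, card_pairs G]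
        rw [Finset.sum_boole]
        unfold pairsIn
        push_cast
        ring_nf
      calc 2 * (G.edgeFinset.card : ℤ) + (pairsIn G Bd : ℤ)
          = _ := hsum.symm
        _ ≤ ∑ p, (Deff (vE G p) + Deff (vE G (swp G p))) := Finset.sum_le_sum hpt
        _ = 2 * ∑ p, Deff (vE G p) := h2s.symm
    have hind : 2 * (Bd.card : ℤ) ≤ 2 * (alphaNum G : ℤ) + (pairsIn G Bd : ℤ) := by
      obtain ⟨S0, hS0, hle⟩ := indep_extract G Bd
      have := card_le_alpha G S0 hS0
      push_cast
      omega
    have hA : (Fintype.card V : ℤ) ≤ ∑ v, Deff (vA G v) := by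
      calc (Fintype.card V : ℤ) = ∑ _v : V, (1:ℤ) := by simp
        _ ≤ _ := Finset.sum_le_sum (fun v _ => F2 v)
    have htot : divDeg Deff = Deff (vT G) + ((∑ v, Deff (vA G v)
        + ∑ v, Deff (vB G v) + ∑ v, Deff (vC G v)) + ∑ p, Deff (vE G p)) :=
      divDeg_hat G Deff
    have hBCsplit : (∑ v, Deff (vB G v)) + (∑ v, Deff (vC G v))
        = ∑ v, (Deff (vB G v) + Deff (vC G v)) := (Finset.sum_add_distrib).symm
    have hhs' : 3 * (Fintype.card V : ℤ) = 2 * (G.edgeFinset.card : ℤ) := by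
      exact_mod_cast hhs
    rw [← hdeg]
    linarith
end Lower

/-- For a connected cubic graph `G`, `2 · dgon(Ĝ) = 11|V| + 2 − 2α(G)`. -/
theorem dgon_hat_cubic [Fintype V] [DecidableEq V] (G : SimpleGraph V) [DecidableRel G.Adj]
    (hG : G.Connected) (hcubic : ∀ v : V, G.degree v = 3) :
    2 * dgon (HatV G) (hatM G (bigM G)) =
      11 * (Fintype.card V : ℤ) + 2 - 2 * (alphaNum G : ℤ) := by
  have hne : Nonempty (HatV G) := ⟨Sum.inl ()⟩
  -- a maximum independent set
  obtain ⟨S, hSind, hScard⟩ := alpha_mem G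
  -- a weight function: members of S on top, injective on the rest
  set eqv := Fintype.equivFin V with heqv
  set wgt : V → ℕ := fun v => if v ∈ S then Fintype.card V else (eqv v : ℕ) with hwgt
  have hwS : ∀ {z v : V}, z ∈ S → v ∉ S → wgt v < wgt z := by
    intro z v hz hv
    simp only [hwgt, if_pos hz, if_neg hv]
    exact (eqv v).isLt
  have hwADJ : ∀ {u w : V}, G.Adj u w → wgt u ≠ wgt w := by
    intro u w hadj heq
    by_cases hu : u ∈ S <;> by_cases hw : w ∈ S
    · exact hSind u hu w hw hadj
    · exact absurd heq.symm (Nat.ne_of_lt (hwS hu hw))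
    · exact absurd heq (Nat.ne_of_lt (hwS hw hu))
    · simp only [hwgt, if_neg hu, if_neg hw, Fin.val_eq_val] at heq
      exact G.ne_of_adj hadj (eqv.injective heq)
  -- handshake
  have hhs : 3 * Fintype.card V = 2 * G.edgeFinset.card := by
    have h1 := SimpleGraph.sum_degrees_eq_twice_card_edges G
    simp only [hcubic, Finset.sum_const, Finset.card_univ, smul_eq_mul] at h1
    omega
  -- the gonality
  have hdgon : dgon (HatV G) (hatM G (bigM G))
      = 4 * (Fintype.card V : ℤ) + (G.edgeFinset.card : ℤ) + 1 - (alphaNum G : ℤ) := by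
    apply dgon_eq_of
    · refine ⟨Dhat G S wgt, Dhat_rank hSind hwADJ hwS (bigM G), ?_⟩
      rw [divDeg_Dhat hwADJ, hScard]
    · exact lower_bound G hcubic
  rw [hdgon]
  have hhs' : 3 * (Fintype.card V : ℤ) = 2 * (G.edgeFinset.card : ℤ) := by
    exact_mod_cast hhs
  ring_nf
  omega
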